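/- arXiv:1911.03105 — 8 statements merged into one kernel-verified Lean document; each statement's English description precedes it below -/
import Mathlib

section
/- Let n be a positive integer, p ≥ 0 a real number, x a real number, and v a nonnegative integer. If Y ~ Poisson(np), then E[h_{v,x}(Y)] = (p − x)^v. -/
open scoped BigOperators

/-- The Poisson probability mass function with mean `μ`: `Pr(Y = t) = e^{-μ} μ^t / t!`. -/
noncomputable def poissonPMF (μ : ℝ) (t : ℕ) : ℝ := Real.exp (-μ) * μ ^ t / t.factorial

/-- `h_{v,x}(y) = Σ_{l=0}^{v} binom(v,l) (-x)^{v-l} Π_{l'=0}^{l-1} ((y - l')/n)`. -/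
noncomputable def hfun (n : ℕ) (x : ℝ) (v : ℕ) (y : ℝ) : ℝ :=
  ∑ l ∈ Finset.range (v + 1), (v.choose l : ℝ) * (-x) ^ (v - l) *
    ∏ l' ∈ Finset.range l, ((y - l') / n)

/-!
Expanding the product, `h_{v,x}(t)` is the binomial expansion of `(t/n - x)^v` in which each
power `(t/n)^l` is replaced by the falling factorial `t(t-1)⋯(t-l+1)/n^l`. The `l`-th factorial
moment of a Poisson law of mean `μ` is `μ^l`, so with `μ = np` the expectation becomes the
binomial expansion of `(p - x)^v`.
-/

open Finset

lemma prod_range_natCast_sub_div {K : Type*} [Field K] (n t l : ℕ) :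
    ∏ i ∈ range l, (((t : K) - i) / n) = t.descFactorial l / (n : K) ^ l := by
  rw [prod_div_distrib, prod_const, card_range, prod_range_natCast_sub,
    ← Nat.descFactorial_eq_prod_range]

lemma hfun_natCast (n : ℕ) (x : ℝ) (v t : ℕ) :
    hfun n x v t = ∑ l ∈ range (v + 1),
      (v.choose l : ℝ) * (-x) ^ (v - l) * (t.descFactorial l / (n : ℝ) ^ l) := by
  simp only [hfun, prod_range_natCast_sub_div]

lemma hasSum_poissonPMF (μ : ℝ) : HasSum (poissonPMF μ) 1 := by
  have h := (NormedSpace.expSeries_div_hasSum_exp μ).mul_left (Real.exp (-μ))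
  rw [← Real.exp_eq_exp_ℝ, ← Real.exp_add, neg_add_cancel, Real.exp_zero] at h
  have hpmf : poissonPMF μ = fun t => Real.exp (-μ) * (μ ^ t / t.factorial) :=
    funext fun t => mul_div_assoc _ _ _
  exact hpmf ▸ h

lemma poissonPMF_add_mul_descFactorial (μ : ℝ) (s l : ℕ) :
    poissonPMF μ (s + l) * (s + l).descFactorial l = μ ^ l * poissonPMF μ s := by
  have hfact : ((s + l).factorial : ℝ) = s.factorial * (s + l).descFactorial l := by
    have h := Nat.factorial_mul_descFactorial (Nat.le_add_left l s)
    rw [Nat.add_sub_cancel] at h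
    exact_mod_cast h.symm
  have hdesc : ((s + l).descFactorial l : ℝ) ≠ 0 := by
    exact_mod_cast (Nat.descFactorial_pos.2 (Nat.le_add_left l s)).ne'
  simp only [poissonPMF, hfact, pow_add]
  field_simp

lemma hasSum_poissonPMF_mul_descFactorial (μ : ℝ) (l : ℕ) :
    HasSum (fun t : ℕ => poissonPMF μ t * t.descFactorial l) (μ ^ l) := by
  rw [← hasSum_nat_add_iff' l]
  have hlow : ∑ t ∈ range l, poissonPMF μ t * t.descFactorial l = 0 :=
    sum_eq_zero fun t ht => by simp [Nat.descFactorial_eq_zero_iff_lt.2 (mem_range.1 ht)]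
  simpa only [hlow, sub_zero, poissonPMF_add_mul_descFactorial, mul_one]
    using (hasSum_poissonPMF μ).mul_left (μ ^ l)

theorem expectation_hfun_eq_general (n : ℕ) (hn : 0 < n) (p : ℝ) (x : ℝ) (v : ℕ) :
    ∑' t : ℕ, poissonPMF (n * p) t * hfun n x v (t : ℝ) = (p - x) ^ v := by
  have hn' : (n : ℝ) ≠ 0 := by positivity
  have hterm : ∀ l ∈ range (v + 1), HasSum
      (fun t : ℕ => (v.choose l : ℝ) * (-x) ^ (v - l) / (n : ℝ) ^ l *
        (poissonPMF (n * p) t * t.descFactorial l))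
      (p ^ l * (-x) ^ (v - l) * v.choose l) := fun l _ => by
    have hpow : p ^ l * (-x) ^ (v - l) * v.choose l
        = (v.choose l : ℝ) * (-x) ^ (v - l) / (n : ℝ) ^ l * (n * p) ^ l := by
      rw [mul_pow]
      field_simp
    exact hpow ▸ (hasSum_poissonPMF_mul_descFactorial (n * p) l).mul_left _
  rw [sub_eq_add_neg, add_pow]
  refine (hasSum_sum hterm).tsum_eq ▸ tsum_congr fun t => ?_
  rw [hfun_natCast, mul_sum]
  refine sum_congr rfl fun l _ => ?_
  ring

/-- If `Y ~ Poisson(np)`, then `E[h_{v,x}(Y)] = (p - x)^v`. -/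
theorem expectation_hfun_eq (n : ℕ) (hn : 0 < n) (p : ℝ) (hp : 0 ≤ p) (x : ℝ) (v : ℕ) :
    ∑' t : ℕ, poissonPMF (n * p) t * hfun n x v (t : ℝ) = (p - x) ^ v :=
  expectation_hfun_eq_general n hn p x v
end

section
/- Let μ ≥ 0 be a real number and m ≥ 1 an integer. If Y ~ Poisson(μ), then the m-th moment satisfies E[Y^m] ≤ Σ_{t=1}^{m} t^{m−t} · binom(m,t) · μ^t. -/
open scoped BigOperators

lemma real_exp_tsum (x : ℝ) : ∑' n : ℕ, x ^ n / n.factorial = Real.exp x := by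
  rw [Real.exp_eq_exp_ℝ, NormedSpace.exp_eq_tsum_div]

lemma nat_mul_descFactorial (n t : ℕ) :
    n * n.descFactorial t = n.descFactorial (t + 1) + t * n.descFactorial t := by
  rw [Nat.descFactorial_succ]
  rcases le_or_gt t n with h | h
  · rw [← Nat.add_mul, Nat.sub_add_cancel h]
  · rw [Nat.descFactorial_eq_zero_iff_lt.2 h]; simp

/-- pointwise key inequality over ℕ. -/
lemma key_pointwise (m : ℕ) (hm : 1 ≤ m) (n : ℕ) :
    n ^ m ≤ ∑ t ∈ Finset.Icc 1 m, t ^ (m - t) * m.choose t * n.descFactorial t := by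
  induction m, hm using Nat.le_induction with
  | base => simp
  | succ m hm ih =>
    have h1 : n ^ (m + 1) ≤
        (∑ t ∈ Finset.Icc 1 m, t ^ (m - t) * m.choose t * n.descFactorial t) * n := by
      rw [pow_succ]
      exact Nat.mul_le_mul_right n ih
    refine h1.trans ?_
    rw [Finset.sum_mul]
    have h2 : ∀ t ∈ Finset.Icc 1 m,
        t ^ (m - t) * m.choose t * n.descFactorial t * n =
          t ^ (m - t) * m.choose t * n.descFactorial (t + 1)
            + t ^ (m + 1 - t) * m.choose t * n.descFactorial t := by
      intro t ht
      simp only [Finset.mem_Icc] at ht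
      have : m + 1 - t = (m - t) + 1 := by omega
      rw [this, pow_succ, mul_assoc, mul_comm (n.descFactorial t) n, nat_mul_descFactorial]
      ring
    rw [Finset.sum_congr rfl h2, Finset.sum_add_distrib]
    -- first sum: reindex
    have h3 : ∑ t ∈ Finset.Icc 1 m, t ^ (m - t) * m.choose t * n.descFactorial (t + 1)
        = ∑ s ∈ Finset.Icc 2 (m + 1),
            (s - 1) ^ (m + 1 - s) * m.choose (s - 1) * n.descFactorial s := by
      rw [show (2 : ℕ) = 1 + 1 from rfl, ← Finset.map_add_right_Icc 1 m 1, Finset.sum_map]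
      refine Finset.sum_congr rfl fun t ht => ?_
      simp only [Finset.mem_Icc] at ht
      simp only [addRightEmbedding_apply, Nat.add_sub_cancel, Nat.succ_sub_succ, Nat.sub_zero]
    rw [h3]
    have h4 : ∑ s ∈ Finset.Icc 2 (m + 1),
          (s - 1) ^ (m + 1 - s) * m.choose (s - 1) * n.descFactorial s
        = ∑ s ∈ Finset.Icc 1 (m + 1),
            (s - 1) ^ (m + 1 - s) * m.choose (s - 1) * n.descFactorial s := by
      rw [show Finset.Icc 1 (m + 1) = insert 1 (Finset.Icc 2 (m + 1)) by
        ext x; simp [Finset.mem_Icc, Finset.mem_insert]; omega]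
      rw [Finset.sum_insert (by simp [Finset.mem_Icc])]
      have h0 : ((1 : ℕ) - 1) ^ (m + 1 - 1) = 0 := by
        rw [Nat.sub_self]
        exact Nat.zero_pow (by omega)
      rw [h0]
      simp
    rw [h4]
    have h5 : ∑ t ∈ Finset.Icc 1 m, t ^ (m + 1 - t) * m.choose t * n.descFactorial t
        ≤ ∑ t ∈ Finset.Icc 1 (m + 1), t ^ (m + 1 - t) * m.choose t * n.descFactorial t := by
      apply Finset.sum_le_sum_of_subset
      apply Finset.Icc_subset_Icc_right; omega
    refine (Nat.add_le_add_left h5 _).trans ?_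
    rw [← Finset.sum_add_distrib]
    refine Finset.sum_le_sum fun s hs => ?_
    simp only [Finset.mem_Icc] at hs
    have hpow : (s - 1) ^ (m + 1 - s) ≤ s ^ (m + 1 - s) :=
      Nat.pow_le_pow_left (Nat.sub_le s 1) _
    calc (s - 1) ^ (m + 1 - s) * m.choose (s - 1) * n.descFactorial s
          + s ^ (m + 1 - s) * m.choose s * n.descFactorial s
        ≤ s ^ (m + 1 - s) * m.choose (s - 1) * n.descFactorial s
          + s ^ (m + 1 - s) * m.choose s * n.descFactorial s := by
          exact Nat.add_le_add_right (Nat.mul_le_mul_right _ (Nat.mul_le_mul_right _ hpow)) _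
      _ = s ^ (m + 1 - s) * (m.choose (s - 1) + m.choose s) * n.descFactorial s := by ring
      _ = s ^ (m + 1 - s) * (m + 1).choose s * n.descFactorial s := by
          obtain ⟨k, rfl⟩ : ∃ k, s = k + 1 := ⟨s - 1, by omega⟩
          rw [Nat.choose_succ_succ]
          simp

lemma poisson_descFactorial_hasSum (μ : ℝ) (hμ : 0 ≤ μ) (t : ℕ) :
    HasSum (fun n : ℕ => poissonPMF μ n * (n.descFactorial t : ℝ)) (μ ^ t) := by
  have hsum : Summable (fun k : ℕ => Real.exp (-μ) * μ ^ t * (μ ^ k / k.factorial)) :=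
    (Real.summable_pow_div_factorial μ).mul_left _
  have heq : ∀ k : ℕ, poissonPMF μ (k + t) * ((k + t).descFactorial t : ℝ)
      = Real.exp (-μ) * μ ^ t * (μ ^ k / k.factorial) := by
    intro k
    have hd : (k.factorial : ℝ) * ((k + t).descFactorial t : ℝ) = ((k + t).factorial : ℝ) := by
      rw [← Nat.cast_mul, ← Nat.factorial_mul_descFactorial (Nat.le_add_left t k)]
      simp
    have hk : (k.factorial : ℝ) ≠ 0 := Nat.cast_ne_zero.2 k.factorial_ne_zero
    have hkt : ((k + t).factorial : ℝ) ≠ 0 := Nat.cast_ne_zero.2 (k + t).factorial_ne_zero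
    unfold poissonPMF
    field_simp
    rw [← hd, pow_add]
    ring
  have hshift : HasSum (fun k : ℕ => poissonPMF μ (k + t) * ((k + t).descFactorial t : ℝ))
      (Real.exp (-μ) * μ ^ t * Real.exp μ) := by
    rw [funext heq]
    have := hsum.hasSum
    have htsum : ∑' k : ℕ, Real.exp (-μ) * μ ^ t * (μ ^ k / k.factorial)
        = Real.exp (-μ) * μ ^ t * Real.exp μ := by
      rw [tsum_mul_left, real_exp_tsum]
    rwa [htsum] at this
  have hval : Real.exp (-μ) * μ ^ t * Real.exp μ = μ ^ t := by
    rw [mul_comm (Real.exp (-μ)) (μ ^ t), mul_assoc, ← Real.exp_add]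
    simp
  rw [hval] at hshift
  have hinj : Function.Injective (fun k : ℕ => k + t) := add_left_injective t
  refine (Function.Injective.hasSum_iff hinj ?_).1 hshift
  intro n hn
  have hnt : n < t := by
    by_contra h
    exact hn ⟨n - t, by simp; omega⟩
  simp [Nat.descFactorial_eq_zero_iff_lt.2 hnt]

lemma poissonPMF_nonneg (μ : ℝ) (hμ : 0 ≤ μ) (n : ℕ) : 0 ≤ poissonPMF μ n := by
  unfold poissonPMF
  positivity

/-- If `Y ~ Poisson(μ)` and `m ≥ 1`, then
`E[Y^m] ≤ Σ_{t=1}^{m} t^{m-t} binom(m,t) μ^t`. -/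
theorem poisson_moment_le (μ : ℝ) (hμ : 0 ≤ μ) (m : ℕ) (hm : 1 ≤ m) :
    ∑' t : ℕ, poissonPMF μ t * (t : ℝ) ^ m
      ≤ ∑ t ∈ Finset.Icc 1 m, (t : ℝ) ^ (m - t) * (m.choose t : ℝ) * μ ^ t := by
  set g : ℕ → ℝ := fun n => ∑ t ∈ Finset.Icc 1 m,
    (t : ℝ) ^ (m - t) * (m.choose t : ℝ) * (poissonPMF μ n * (n.descFactorial t : ℝ)) with hg
  have hfle : ∀ n : ℕ, poissonPMF μ n * (n : ℝ) ^ m ≤ g n := by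
    intro n
    have := key_pointwise m hm n
    have hcast : ((n : ℝ)) ^ m ≤ ∑ t ∈ Finset.Icc 1 m,
        (t : ℝ) ^ (m - t) * (m.choose t : ℝ) * (n.descFactorial t : ℝ) := by
      calc ((n : ℝ)) ^ m = ((n ^ m : ℕ) : ℝ) := by push_cast; ring
        _ ≤ ((∑ t ∈ Finset.Icc 1 m, t ^ (m - t) * m.choose t * n.descFactorial t : ℕ) : ℝ) := by
            exact_mod_cast this
        _ = _ := by push_cast; ring
    calc poissonPMF μ n * (n : ℝ) ^ m
        ≤ poissonPMF μ n * ∑ t ∈ Finset.Icc 1 m,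
            (t : ℝ) ^ (m - t) * (m.choose t : ℝ) * (n.descFactorial t : ℝ) :=
          mul_le_mul_of_nonneg_left hcast (poissonPMF_nonneg μ hμ n)
      _ = g n := by rw [hg, Finset.mul_sum]; exact Finset.sum_congr rfl fun t _ => by ring
  have hgsummand : ∀ t : ℕ, Summable (fun n : ℕ =>
      (t : ℝ) ^ (m - t) * (m.choose t : ℝ) * (poissonPMF μ n * (n.descFactorial t : ℝ))) := by
    intro t
    have h := (poisson_descFactorial_hasSum μ hμ t).summable
    exact h.mul_left _
  have hgsum : Summable g := by
    rw [hg]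
    exact summable_sum fun t _ => hgsummand t
  have hfnonneg : ∀ n : ℕ, 0 ≤ poissonPMF μ n * (n : ℝ) ^ m := by
    intro n
    exact mul_nonneg (poissonPMF_nonneg μ hμ n) (by positivity)
  have hfsummable : Summable (fun n : ℕ => poissonPMF μ n * (n : ℝ) ^ m) :=
    Summable.of_nonneg_of_le hfnonneg hfle hgsum
  calc ∑' n : ℕ, poissonPMF μ n * (n : ℝ) ^ m
      ≤ ∑' n : ℕ, g n := Summable.tsum_le_tsum hfle hfsummable hgsum
    _ = ∑ t ∈ Finset.Icc 1 m, (t : ℝ) ^ (m - t) * (m.choose t : ℝ) * μ ^ t := by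
        rw [hg, Summable.tsum_finsetSum fun t _ => hgsummand t]
        refine Finset.sum_congr rfl fun t _ => ?_
        rw [tsum_mul_left, (poisson_descFactorial_hasSum μ hμ t).tsum_eq]
end

section
/- Let p(x) = Σ_{j=0}^{d} a_j x^j be a real polynomial of degree at most d, and let A := sup_{x₁, x₂ ∈ [0,1]} |p(x₁) − p(x₂)|. Then for every j with 1 ≤ j ≤ d, the coefficient satisfies |a_j| ≤ A · 2^{7d/2}. -/
/-!
Subtracting `p(0)` leaves the coefficients `a_j`, `j ≥ 1`, unchanged and gives a polynomial `q`
with `|q| ≤ A` on `[0, 1]`. Interpolate `q` at the equispaced nodes `k / d`, `0 ≤ k ≤ d`. The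
Lagrange basis polynomial of node `i` is its nodal weight `w_i` times a product of `d` factors
`X - v` with `|v| ≤ 1`, whose coefficients are at most `2 ^ d` in absolute value, and
`|w_i| = d ^ d / (i! (d - i)!)`. Summing over the nodes gives
`|a_j| ≤ A 2 ^ d (d ^ d / d!) 2 ^ d ≤ A (4e) ^ d`, and `4e < 2 ^ (7/2)`.
-/

open Polynomial Finset Nat

theorem prod_erase_range_abs_sub {d i : ℕ} (hi : i ≤ d) :
    ∏ k ∈ (range (d + 1)).erase i, |(i : ℝ) - k| = i ! * (d - i)! := by
  have hfact (n : ℕ) : ∏ k ∈ range n, ((k : ℝ) + 1) = n ! := by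
    exact_mod_cast prod_range_add_one_eq_factorial n
  have hsplit : (range (d + 1)).erase i = range i ∪ Ico (i + 1) (d + 1) := by
    ext k; simp only [mem_erase, mem_range, mem_union, mem_Ico]; omega
  rw [hsplit, prod_union (disjoint_left.2 fun k hk hk' ↦ by simp at hk hk'; omega),
    ← prod_range_reflect, prod_Ico_eq_prod_range, ← hfact, ← hfact,
    show d + 1 - (i + 1) = d - i by omega]
  congr 1 <;> refine prod_congr rfl fun k hk ↦ ?_ <;> simp only [mem_range] at hk
  · rw [Nat.cast_sub (by omega), Nat.cast_sub (by omega)]; push_cast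
    rw [abs_of_nonneg (by linarith)]; ring
  · push_cast; rw [abs_of_nonpos (by linarith)]; ring

theorem four_mul_exp_one_pow_le (d : ℕ) :
    (4 * Real.exp 1) ^ d ≤ (2 : ℝ) ^ ((7 * (d : ℝ)) / 2) := by
  have h128 : (2 : ℝ) ^ ((7 : ℝ) / 2) = √128 := by
    rw [show (7 : ℝ) / 2 = (7 : ℕ) * (1 / 2) by norm_num, Real.rpow_natCast_mul (by norm_num),
      ← Real.sqrt_eq_rpow]
    norm_num
  have hbase : 4 * Real.exp 1 ≤ (2 : ℝ) ^ ((7 : ℝ) / 2) := by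
    rw [h128, Real.le_sqrt (by positivity) (by norm_num)]
    nlinarith [Real.exp_one_lt_d9, Real.exp_pos 1]
  calc (4 * Real.exp 1) ^ d ≤ ((2 : ℝ) ^ ((7 : ℝ) / 2)) ^ d := by gcongr
    _ = (2 : ℝ) ^ ((7 * (d : ℝ)) / 2) := by
        rw [← Real.rpow_natCast, ← Real.rpow_mul (by norm_num)]; ring_nf

namespace Lagrange

section Field

variable {F ι : Type*} [Field F] [DecidableEq ι] {s : Finset ι} {v : ι → F}

theorem basis_eq_C_nodalWeight_mul_nodal_erase (i : ι) :
    Lagrange.basis s v i = C (nodalWeight s v i) * nodal (s.erase i) v := by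
  simp_rw [Lagrange.basis, basisDivisor, nodalWeight, prod_mul_distrib, map_prod, nodal]

theorem coeff_eq_sum_eval_mul_coeff_basis (hvs : Set.InjOn v s) {p : F[X]}
    (hp : p.degree < #s) (n : ℕ) :
    p.coeff n = ∑ i ∈ s, p.eval (v i) * (Lagrange.basis s v i).coeff n := by
  conv_lhs => rw [eq_interpolate hvs hp, interpolate_apply, finsetSum_coeff]
  simp only [coeff_C_mul]

end Field

theorem abs_coeff_nodal_le {ι : Type*} (s : Finset ι) {v : ι → ℝ} (hv : ∀ i ∈ s, |v i| ≤ 1)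
    (n : ℕ) : |(nodal s v).coeff n| ≤ 2 ^ #s := by
  classical
  induction s using Finset.induction_on generalizing n with
  | empty => by_cases hn : n = 0 <;> simp [nodal_empty, coeff_one, hn]
  | insert i s hi ih =>
    replace ih := ih fun k hk ↦ hv k (mem_insert_of_mem hk)
    have hX : |(X * nodal s v).coeff n| ≤ 2 ^ #s := by
      cases n with
      | zero => simp
      | succ n => simpa [coeff_X_mul] using ih n
    rw [nodal_insert_eq_nodal hi, card_insert_of_notMem hi, pow_succ, mul_two, sub_mul,
      coeff_sub, coeff_C_mul]
    calc _ ≤ |(X * nodal s v).coeff n| + |v i| * |(nodal s v).coeff n| := by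
          rw [← abs_mul]; exact abs_sub _ _
      _ ≤ 2 ^ #s + 1 * 2 ^ #s := by
          gcongr
          · exact hv i (mem_insert_self i s)
          · exact ih n
      _ = _ := by ring

variable {ι : Type*} [DecidableEq ι] {s : Finset ι} {v : ι → ℝ}

theorem abs_coeff_basis_le (hv : ∀ k ∈ s, |v k| ≤ 1) (i : ι) (n : ℕ) :
    |(Lagrange.basis s v i).coeff n| ≤ |nodalWeight s v i| * 2 ^ #(s.erase i) := by
  rw [basis_eq_C_nodalWeight_mul_nodal_erase, coeff_C_mul, abs_mul]
  gcongr
  exact abs_coeff_nodal_le _ (fun k hk ↦ hv k (mem_of_mem_erase hk)) n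

theorem abs_coeff_le_of_abs_eval_le_nodes (hvs : Set.InjOn v s) (hv : ∀ i ∈ s, |v i| ≤ 1)
    {p : ℝ[X]} (hp : p.degree < #s) {A : ℝ} (hA : ∀ i ∈ s, |p.eval (v i)| ≤ A) (n : ℕ) :
    |p.coeff n| ≤ A * 2 ^ (#s - 1) * ∑ i ∈ s, |nodalWeight s v i| := by
  rw [coeff_eq_sum_eval_mul_coeff_basis hvs hp, mul_sum]
  refine (abs_sum_le_sum_abs _ _).trans (sum_le_sum fun i hi ↦ ?_)
  rw [abs_mul, ← card_erase_of_mem hi]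
  calc _ ≤ A * (|nodalWeight s v i| * 2 ^ #(s.erase i)) :=
        mul_le_mul (hA i hi) (abs_coeff_basis_le hv i n) (abs_nonneg _)
          ((abs_nonneg _).trans (hA i hi))
    _ = _ := by ring

theorem abs_nodalWeight_equispaced {d i : ℕ} (hi : i ≤ d) :
    |nodalWeight (range (d + 1)) (fun k : ℕ ↦ (k : ℝ) / d) i| = d ^ d / d ! * d.choose i := by
  rcases Nat.eq_zero_or_pos d with rfl | hd
  · obtain rfl : i = 0 := by omega
    simp [nodalWeight]
  have hd' : (d : ℝ) ≠ 0 := by positivity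
  rw [nodalWeight, abs_prod]
  simp_rw [abs_inv, div_sub_div_same, abs_div, Nat.abs_cast]
  rw [prod_inv_distrib, prod_div_distrib, prod_erase_range_abs_sub hi, prod_const,
    card_erase_of_mem (mem_range.2 (by omega)), card_range, add_tsub_cancel_right,
    Nat.cast_choose ℝ hi]
  field_simp

theorem sum_abs_nodalWeight_equispaced (d : ℕ) :
    ∑ i ∈ range (d + 1), |nodalWeight (range (d + 1)) (fun k : ℕ ↦ (k : ℝ) / d) i|
      = d ^ d / d ! * 2 ^ d := by
  rw [sum_congr rfl fun i hi ↦ abs_nodalWeight_equispaced (mem_range_succ_iff.1 hi), ← mul_sum,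
    ← Nat.cast_sum, sum_range_choose, Nat.cast_pow, Nat.cast_ofNat]

end Lagrange

theorem abs_coeff_le_of_abs_eval_le_on_unitInterval {p : ℝ[X]} {d : ℕ} (hp : p.natDegree ≤ d)
    {A : ℝ} (hA : ∀ x ∈ Set.Icc (0 : ℝ) 1, |p.eval x| ≤ A) (n : ℕ) :
    |p.coeff n| ≤ A * (4 * Real.exp 1) ^ d := by
  have hd : (0 : ℝ) ≤ d := d.cast_nonneg
  have hnodes : ∀ k ∈ range (d + 1), (k : ℝ) / d ∈ Set.Icc (0 : ℝ) 1 := fun k hk ↦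
    ⟨by positivity, div_le_one_of_le₀ (by exact_mod_cast mem_range_succ_iff.1 hk) hd⟩
  have hinj : Set.InjOn (fun k : ℕ ↦ (k : ℝ) / d) (range (d + 1)) := fun k hk l hl h ↦ by
    rcases Nat.eq_zero_or_pos d with rfl | hd
    · simp_all
    · simpa [div_left_inj' (by positivity : (d : ℝ) ≠ 0)] using h
  have hdeg : p.degree < #(range (d + 1)) := by
    rw [card_range]; exact degree_le_natDegree.trans_lt (by exact_mod_cast Nat.lt_succ_of_le hp)
  have hA0 : 0 ≤ A := (abs_nonneg _).trans (hA 0 ⟨le_rfl, zero_le_one⟩)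
  have hexp : (d : ℝ) ^ d / d ! ≤ Real.exp 1 ^ d := by
    simpa [← Real.exp_nat_mul] using Real.pow_div_factorial_le_exp _ hd d
  calc |p.coeff n| ≤ A * 2 ^ d * (d ^ d / d ! * 2 ^ d) := by
        simpa [Lagrange.sum_abs_nodalWeight_equispaced] using
          Lagrange.abs_coeff_le_of_abs_eval_le_nodes hinj
            (fun k hk ↦ abs_le.2 ⟨by linarith [(hnodes k hk).1], (hnodes k hk).2⟩) hdeg
            (fun k hk ↦ hA _ (hnodes k hk)) n
    _ ≤ A * 2 ^ d * (Real.exp 1 ^ d * 2 ^ d) := by gcongr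
    _ = A * (4 * Real.exp 1) ^ d := by
        rw [mul_pow, show (4 : ℝ) ^ d = 2 ^ d * 2 ^ d by rw [← mul_pow]; norm_num]; ring

/-- Coefficient bound for a real polynomial `p(x) = Σ_{j=0}^d a_j x^j` in terms of
`A := sup_{x₁,x₂ ∈ [0,1]} |p(x₁) - p(x₂)|` (formalized via an arbitrary upper bound `A`):
for every `1 ≤ j ≤ d`, `|a_j| ≤ A · 2^{3.5 d}`. -/
theorem coeff_bound (d : ℕ) (a : ℕ → ℝ) (A : ℝ)
    (hA : ∀ x₁ ∈ Set.Icc (0 : ℝ) 1, ∀ x₂ ∈ Set.Icc (0 : ℝ) 1,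
      |(∑ j ∈ Finset.range (d + 1), a j * x₁ ^ j) -
        (∑ j ∈ Finset.range (d + 1), a j * x₂ ^ j)| ≤ A)
    (j : ℕ) (hj1 : 1 ≤ j) (hjd : j ≤ d) :
    |a j| ≤ A * 2 ^ ((7 * (d : ℝ)) / 2) := by
  set p : ℝ[X] := ∑ k ∈ range (d + 1), C (a k) * X ^ k
  have hp_eval (x : ℝ) : p.eval x = ∑ k ∈ range (d + 1), a k * x ^ k := by
    simp [p, eval_finsetSum]
  have hp_coeff : p.coeff j = a j := by
    simp [p, finsetSum_coeff, Nat.lt_succ_of_le hjd]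
  set q := p - C (p.eval 0)
  have hq_deg : q.natDegree ≤ d :=
    (natDegree_sub_le _ _).trans (max_le (natDegree_sum_le_of_forall_le _ _ fun k hk ↦
      (natDegree_C_mul_X_pow_le _ _).trans (mem_range_succ_iff.1 hk)) (by simp))
  have hq_eval : ∀ x ∈ Set.Icc (0 : ℝ) 1, |q.eval x| ≤ A := fun x hx ↦ by
    rw [eval_sub, eval_C, hp_eval, hp_eval]; exact hA x hx 0 ⟨le_rfl, zero_le_one⟩
  have hq_coeff : q.coeff j = a j := by
    rw [coeff_sub, coeff_C, if_neg (by omega), hp_coeff, sub_zero]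
  have hA0 : 0 ≤ A := (abs_nonneg _).trans (hq_eval 0 ⟨le_rfl, zero_le_one⟩)
  calc |a j| ≤ A * (4 * Real.exp 1) ^ d :=
        hq_coeff ▸ abs_coeff_le_of_abs_eval_le_on_unitInterval hq_deg hq_eval j
    _ ≤ A * 2 ^ ((7 * (d : ℝ)) / 2) := by gcongr; exact four_mul_exp_one_pow_le d
end

section
/- Let n be a positive integer, p ≥ 0 a real number, and l, a, b integers with 0 ≤ l ≤ a ≤ b. If Y ~ Poisson(np), then E[(∏_{l'=0}^{l−1}((Y − l')/n) − p^l) · 1_{a ≤ Y ≤ b}] = p^l · Σ_{t=a−l}^{a−1} e^{−np}(np)^t/t! − p^l · Σ_{t=b−l+1}^{b} e^{−np}(np)^t/t!. -/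
open scoped BigOperators

/-! The falling factorial `t(t-1)⋯(t-l+1)` turns the Poisson weight of `t` into `μ^l` times the
weight of `t - l`, so on `a ≤ Y ≤ b` the expectation is `p^l` times a difference of the
Poisson probabilities of `[a-l, b-l]` and of `[a, b]`; the two windows overlap, leaving only
the two boundary strips of length `l`. -/

open Finset

theorem Nat.cast_descFactorial_eq_prod_range {R : Type*} [CommRing R] (t l : ℕ) :
    (t.descFactorial l : R) = ∏ i ∈ range l, ((t : R) - i) := by
  rw [← descPochhammer_eval_eq_descFactorial, descPochhammer_eval_eq_prod_range]

theorem poissonPMF_mul_descFactorial (μ : ℝ) {t l : ℕ} (h : l ≤ t) :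
    poissonPMF μ t * t.descFactorial l = μ ^ l * poissonPMF μ (t - l) := by
  obtain ⟨s, rfl⟩ := Nat.exists_eq_add_of_le' h
  have hfac : (s.factorial * (s + l).descFactorial l : ℝ) = (s + l).factorial := by
    exact_mod_cast Nat.add_sub_cancel s l ▸ Nat.factorial_mul_descFactorial h
  simp only [poissonPMF, Nat.add_sub_cancel]
  rw [← hfac]
  field_simp
  ring

theorem poissonPMF_mul_prod_div {n : ℕ} (hn : n ≠ 0) (p : ℝ) {t l : ℕ} (h : l ≤ t) :
    poissonPMF (n * p) t * ∏ i ∈ range l, (((t : ℝ) - i) / n)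
      = p ^ l * poissonPMF (n * p) (t - l) := by
  have hn' : (n : ℝ) ≠ 0 := Nat.cast_ne_zero.mpr hn
  rw [prod_div_distrib, prod_const, card_range, ← Nat.cast_descFactorial_eq_prod_range,
    mul_div_assoc', poissonPMF_mul_descFactorial _ h, mul_pow]
  field_simp

theorem Finset.sum_Ico_sub_shift {M : Type*} [AddCommGroup M] (g : ℕ → M) {l a c : ℕ}
    (hla : l ≤ a) (hac : a ≤ c) :
    ∑ t ∈ Ico a c, (g (t - l) - g t) = ∑ t ∈ Ico (a - l) a, g t - ∑ t ∈ Ico (c - l) c, g t := by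
  obtain ⟨a, rfl⟩ := Nat.exists_eq_add_of_le' hla
  obtain ⟨c, rfl⟩ := Nat.exists_eq_add_of_le' (hla.trans hac)
  have hac : a ≤ c := by omega
  simp only [sum_sub_distrib, sum_Ico_add_right_sub_eq, Nat.add_sub_cancel]
  have h₁ := sum_Ico_consecutive g hac (Nat.le_add_right c l)
  have h₂ := sum_Ico_consecutive g (Nat.le_add_right a l) (Nat.add_le_add_right hac l)
  rw [← sub_eq_zero, ← sub_eq_zero.mpr (h₁.trans h₂.symm)]
  abel

theorem expectation_falling_indicator_general (n : ℕ) (hn : 0 < n) (p : ℝ)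
    (l a b : ℕ) (hla : l ≤ a) (hab : a ≤ b) :
    ∑' t : ℕ, poissonPMF (n * p) t *
        ((∏ l' ∈ Finset.range l, (((t : ℝ) - l') / n)) - p ^ l) *
        (if a ≤ t ∧ t ≤ b then (1 : ℝ) else 0)
      = p ^ l * (∑ t ∈ Finset.Ico (a - l) a, poissonPMF (n * p) t)
        - p ^ l * (∑ t ∈ Finset.Icc (b - l + 1) b, poissonPMF (n * p) t) := by
  have hwindow : ∀ t, (a ≤ t ∧ t ≤ b) ↔ t ∈ Ico a (b + 1) := by
    intro t; rw [mem_Ico]; omega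
  have hterm : ∀ t ∈ Ico a (b + 1), poissonPMF (n * p) t *
      ((∏ l' ∈ range l, (((t : ℝ) - l') / n)) - p ^ l)
        = p ^ l * (poissonPMF (n * p) (t - l) - poissonPMF (n * p) t) := by
    intro t ht
    rw [mul_sub, poissonPMF_mul_prod_div hn.ne' p (hla.trans (mem_Ico.mp ht).1)]
    ring
  simp only [hwindow, mul_ite, mul_one, mul_zero]
  rw [tsum_eq_sum (s := Ico a (b + 1)) (fun t ht => if_neg ht), sum_ite_mem, inter_self,
    sum_congr rfl hterm, ← mul_sum, sum_Ico_sub_shift _ hla (by omega),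
    show b - l + 1 = b + 1 - l by omega, ← Ico_add_one_right_eq_Icc, mul_sub]

/-- If `Y ~ Poisson(np)` and `0 ≤ l ≤ a ≤ b`, then
`E[(Π_{l'=0}^{l-1}((Y - l')/n) - p^l) 1_{a ≤ Y ≤ b}]
  = p^l Σ_{t=a-l}^{a-1} e^{-np}(np)^t/t! - p^l Σ_{t=b-l+1}^{b} e^{-np}(np)^t/t!`. -/
theorem expectation_falling_indicator (n : ℕ) (hn : 0 < n) (p : ℝ) (hp : 0 ≤ p)
    (l a b : ℕ) (hla : l ≤ a) (hab : a ≤ b) :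
    ∑' t : ℕ, poissonPMF (n * p) t *
        ((∏ l' ∈ Finset.range l, (((t : ℝ) - l') / n)) - p ^ l) *
        (if a ≤ t ∧ t ≤ b then (1 : ℝ) else 0)
      = p ^ l * (∑ t ∈ Finset.Ico (a - l) a, poissonPMF (n * p) t)
        - p ^ l * (∑ t ∈ Finset.Icc (b - l + 1) b, poissonPMF (n * p) t) :=
  expectation_falling_indicator_general n hn p l a b hla hab
end

section
/- Let n be a positive integer, p ≥ 0 a real number, x a real number, and v, s integers with 1 ≤ v < s. Then H_{v,n}(s, p, x) = p · e^{−np} · (np)^{s−1}/(s−1)! · Σ_{l=0}^{v−1} (p − x)^{v−l−1} · h_{l,x}(s−1). -/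
open scoped BigOperators

/-- `H_{v,n}(s, p, x) = Σ_{l=0}^{v} binom(v,l)(-x)^{v-l} p^l Σ_{t=s-l}^{s-1} e^{-np}(np)^t/t!`. -/
noncomputable def Hfun (n : ℕ) (v s : ℕ) (p x : ℝ) : ℝ :=
  ∑ l ∈ Finset.range (v + 1), (v.choose l : ℝ) * (-x) ^ (v - l) * p ^ l *
    ∑ t ∈ Finset.Ico (s - l) s, Real.exp (-((n : ℝ) * p)) * ((n : ℝ) * p) ^ t / t.factorial

lemma key_sum (a p : ℝ) (k : ℕ) : ∀ v, k < v →
    ∑ l ∈ Finset.Ico (k+1) (v+1), (v.choose l : ℝ) * a^(v-l) * p^l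
      = p^(k+1) * ∑ m ∈ Finset.Ico k v, (m.choose k : ℝ) * a^(m-k) * (p+a)^(v-1-m) := by
  refine Nat.le_induction ?_ ?_
  · simp [Finset.sum_Ico_eq_sum_range]
  · intro v hv ih
    have h1 : ∑ l ∈ Finset.Ico (k+1) (v+1+1), ((v+1).choose l : ℝ) * a^(v+1-l) * p^l
        = ∑ l ∈ Finset.Ico (k+1) (v+1+1),
            ((v.choose l : ℝ) * a^(v+1-l) * p^l + (v.choose (l-1) : ℝ) * a^(v+1-l) * p^l) := by
      refine Finset.sum_congr rfl fun l hl => ?_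
      have hl1 : 1 ≤ l := by simp [Finset.mem_Ico] at hl; omega
      have h := Nat.choose_succ_succ v (l-1)
      simp only [Nat.succ_eq_add_one, show l-1+1 = l from by omega] at h
      rw [h]
      push_cast
      ring
    have hA : ∑ l ∈ Finset.Ico (k+1) (v+1+1), (v.choose l : ℝ) * a^(v+1-l) * p^l
        = a * ∑ l ∈ Finset.Ico (k+1) (v+1), (v.choose l : ℝ) * a^(v-l) * p^l := by
      rw [Finset.sum_Ico_succ_top (by omega), Nat.choose_succ_self, Finset.mul_sum]
      simp only [Nat.cast_zero, zero_mul, add_zero]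
      refine Finset.sum_congr rfl fun l hl => ?_
      have : l ≤ v := by simp [Finset.mem_Ico] at hl; omega
      rw [show v+1-l = (v-l)+1 by omega]
      ring
    have hB : ∑ l ∈ Finset.Ico (k+1) (v+1+1), (v.choose (l-1) : ℝ) * a^(v+1-l) * p^l
        = p * (∑ m ∈ Finset.Ico (k+1) (v+1), (v.choose m : ℝ) * a^(v-m) * p^m)
            + (v.choose k : ℝ) * a^(v-k) * p^(k+1) := by
      rw [← Finset.sum_Ico_add' (fun l => (v.choose (l-1) : ℝ) * a^(v+1-l) * p^l) k (v+1) 1,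
        Finset.sum_eq_sum_Ico_succ_bot (show k < v+1 by omega)]
      have t2 : ∑ x ∈ Finset.Ico (k+1) (v+1),
            (v.choose (x+1-1) : ℝ) * a^(v+1-(x+1)) * p^(x+1)
          = p * ∑ m ∈ Finset.Ico (k+1) (v+1), (v.choose m : ℝ) * a^(v-m) * p^m := by
        rw [Finset.mul_sum]
        refine Finset.sum_congr rfl fun m hm => ?_
        have : m ≤ v := by simp [Finset.mem_Ico] at hm; omega
        rw [show m+1-1 = m by omega, show v+1-(m+1) = v-m by omega]
        ring
      rw [t2, show k+1-1 = k by omega, show v+1-(k+1) = v-k by omega]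
      ring
    rw [h1, Finset.sum_add_distrib, hA, hB,
      Finset.sum_Ico_succ_top (show k ≤ v by omega)]
    have hsplit : ∑ m ∈ Finset.Ico k v, (m.choose k : ℝ) * a^(m-k) * (p+a)^(v+1-1-m)
        = (p+a) * ∑ m ∈ Finset.Ico k v, (m.choose k : ℝ) * a^(m-k) * (p+a)^(v-1-m) := by
      rw [Finset.mul_sum]
      refine Finset.sum_congr rfl fun m hm => ?_
      have : m < v := by simp [Finset.mem_Ico] at hm; omega
      rw [show v+1-1-m = (v-1-m)+1 by omega]
      ring
    rw [hsplit, ih, show v+1-1-v = 0 by omega, pow_zero]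
    ring

lemma term_eq (n : ℕ) (hn : 0 < n) (p : ℝ) (m j : ℕ) (hj : j ≤ m) :
    p * (Real.exp (-((n:ℝ)*p)) * ((n:ℝ)*p)^m / m.factorial) *
        ∏ j' ∈ Finset.range j, (((m:ℕ):ℝ) - (j':ℕ)) / n
      = p^(j+1) * (Real.exp (-((n:ℝ)*p)) * ((n:ℝ)*p)^(m-j) / (m-j).factorial) := by
  have hfactn : (m-j).factorial * m.descFactorial j = m.factorial :=
    Nat.factorial_mul_descFactorial hj
  have hfact : ((m-j).factorial : ℝ) * (m.descFactorial j : ℝ) = (m.factorial : ℝ) := by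
    exact_mod_cast congrArg (Nat.cast (R := ℝ)) hfactn
  have hn0 : (n:ℝ) ≠ 0 := Nat.cast_ne_zero.mpr hn.ne'
  have hf1 : (m.factorial : ℝ) ≠ 0 := Nat.cast_ne_zero.mpr m.factorial_ne_zero
  have hf2 : ((m-j).factorial : ℝ) ≠ 0 := Nat.cast_ne_zero.mpr (m-j).factorial_ne_zero
  have hprod : ∏ j' ∈ Finset.range j, (((m:ℕ):ℝ) - (j':ℕ)) / n
      = ((m.descFactorial j : ℕ) : ℝ) / (n:ℝ)^j := by
    have h1 : ∀ i ∈ Finset.range j, ((m:ℝ) - (i:ℕ)) / n = (((m - i : ℕ):ℝ)) / n := by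
      intro i hi
      have : i < m := by simp only [Finset.mem_range] at hi; omega
      rw [Nat.cast_sub this.le]
    rw [Finset.prod_congr rfl h1, Finset.prod_div_distrib, Finset.prod_const,
      Finset.card_range, ← Nat.cast_prod, ← Nat.descFactorial_eq_prod_range]
  have hdesc : ((m.descFactorial j : ℕ) : ℝ) = (m.factorial : ℝ) / ((m-j).factorial : ℝ) := by
    field_simp
    linear_combination hfact
  have hpow : ((n:ℝ)*p)^m = ((n:ℝ)*p)^(m-j) * ((n:ℝ)^j * p^j) := by
    rw [← mul_pow, ← pow_add]; congr 1; omega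
  rw [hprod, hdesc, hpow]
  field_simp
  ring

/-- For `1 ≤ v < s`:
`H_{v,n}(s,p,x) = p e^{-np} (np)^{s-1}/(s-1)! · Σ_{l=0}^{v-1} (p-x)^{v-l-1} h_{l,x}(s-1)`. -/
theorem Hfun_closed_form (n : ℕ) (hn : 0 < n) (p : ℝ) (hp : 0 ≤ p) (x : ℝ)
    (v s : ℕ) (hv : 1 ≤ v) (hvs : v < s) :
    Hfun n v s p x
      = p * Real.exp (-((n : ℝ) * p)) * ((n : ℝ) * p) ^ (s - 1) / (s - 1).factorial *
          ∑ l ∈ Finset.range v, (p - x) ^ (v - l - 1) * hfun n x l ((s - 1 : ℕ) : ℝ) := by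
  obtain ⟨m, rfl⟩ : ∃ m, s = m + 1 := ⟨s - 1, by omega⟩
  have hvm : v ≤ m := by omega
  have hsub : ∀ l : ℕ, v - l - 1 = v - 1 - l := fun l => by omega
  simp only [Nat.add_sub_cancel, hsub]
  set E : ℕ → ℝ := fun t => Real.exp (-((n:ℝ)*p)) * ((n:ℝ)*p)^t / t.factorial with hE
  -- LHS transformation
  have lhs_eq : Hfun n v (m+1) p x
      = ∑ k ∈ Finset.Ico 0 v,
          (∑ l ∈ Finset.Ico (k+1) (v+1), (v.choose l : ℝ) * (-x)^(v-l) * p^l) * E (m-k) := by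
    rw [Hfun]
    have inner : ∀ l ∈ Finset.range (v+1),
        (v.choose l : ℝ) * (-x)^(v-l) * p^l *
            ∑ t ∈ Finset.Ico (m+1-l) (m+1), Real.exp (-((n:ℝ)*p)) * ((n:ℝ)*p)^t / t.factorial
          = ∑ k ∈ Finset.range l, (v.choose l : ℝ) * (-x)^(v-l) * p^l * E (m-k) := by
      intro l hl
      have hlv : l ≤ v := by simp only [Finset.mem_range] at hl; omega
      rw [Finset.mul_sum]
      refine Finset.sum_nbij' (fun t => m - t) (fun k => m - k) ?_ ?_ ?_ ?_ ?_
      · intro t ht; simp only [Finset.mem_Ico] at ht; simp only [Finset.mem_range]; omega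
      · intro k hk; simp only [Finset.mem_range] at hk; simp only [Finset.mem_Ico]; omega
      · intro t ht; simp only [Finset.mem_Ico] at ht; omega
      · intro k hk; simp only [Finset.mem_range] at hk; omega
      · intro t ht; simp only [Finset.mem_Ico] at ht
        have h2 : m - (m - t) = t := by omega
        rw [hE, h2]
    rw [Finset.sum_congr rfl inner]
    simp only [Finset.range_eq_Ico]
    rw [← Finset.sum_Ico_Ico_comm' 0 (v+1)
      (fun k l => (v.choose l : ℝ) * (-x)^(v-l) * p^l * E (m-k))]
    rw [Finset.sum_Ico_succ_top (by omega : 0 ≤ v)]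
    simp only [Finset.Ico_self, Finset.sum_empty, add_zero]
    refine Finset.sum_congr rfl fun k hk => ?_
    rw [Finset.sum_mul]
  -- RHS transformation
  have rhs_eq : p * Real.exp (-((n:ℝ)*p)) * ((n:ℝ)*p)^m / m.factorial *
        ∑ l ∈ Finset.range v, (p-x)^(v-1-l) * hfun n x l ((m:ℕ):ℝ)
      = ∑ k ∈ Finset.Ico 0 v,
          (p^(k+1) * ∑ l ∈ Finset.Ico k v, (l.choose k : ℝ) * (-x)^(l-k) * (p-x)^(v-1-l))
            * E (m-k) := by
    rw [Finset.mul_sum]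
    have step : ∀ l ∈ Finset.range v,
        p * Real.exp (-((n:ℝ)*p)) * ((n:ℝ)*p)^m / m.factorial *
            ((p-x)^(v-1-l) * hfun n x l ((m:ℕ):ℝ))
          = ∑ j ∈ Finset.range (l+1),
              (l.choose j : ℝ) * (-x)^(l-j) * (p-x)^(v-1-l) * (p^(j+1) * E (m-j)) := by
      intro l hl
      have hlv : l < v := by simp only [Finset.mem_range] at hl; omega
      rw [hfun, Finset.mul_sum, Finset.mul_sum]
      refine Finset.sum_congr rfl fun j hj => ?_
      have hjm : j ≤ m := by simp only [Finset.mem_range] at hj; omega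
      have ht := term_eq n hn p m j hjm
      rw [hE]
      calc p * Real.exp (-((n:ℝ)*p)) * ((n:ℝ)*p)^m / m.factorial *
              ((p-x)^(v-1-l) * ((l.choose j : ℝ) * (-x)^(l-j) *
                ∏ j' ∈ Finset.range j, (((m:ℕ):ℝ) - (j':ℕ)) / n))
          = (l.choose j : ℝ) * (-x)^(l-j) * (p-x)^(v-1-l) *
              (p * (Real.exp (-((n:ℝ)*p)) * ((n:ℝ)*p)^m / m.factorial) *
                ∏ j' ∈ Finset.range j, (((m:ℕ):ℝ) - (j':ℕ)) / n) := by ring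
        _ = _ := by rw [ht]
    rw [Finset.sum_congr rfl step]
    simp only [Finset.range_eq_Ico]
    rw [← Finset.sum_Ico_Ico_comm 0 v
      (fun j l => (l.choose j : ℝ) * (-x)^(l-j) * (p-x)^(v-1-l) * (p^(j+1) * E (m-j)))]
    refine Finset.sum_congr rfl fun k hk => ?_
    rw [Finset.mul_sum, Finset.sum_mul]
    refine Finset.sum_congr rfl fun l hl => ?_
    ring
  rw [lhs_eq, rhs_eq]
  refine Finset.sum_congr rfl fun k hk => ?_
  have hk' : k < v := by simp only [Finset.mem_Ico] at hk; omega
  have hkey := key_sum (-x) p k v hk'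
  rw [hkey, show p + -x = p - x from by ring]
end

section
/- Let n be a positive integer, d ≥ 1 an integer, L ≥ 0 and I > 0 real numbers, x and s real numbers, and a_0, …, a_d real coefficients with |a_v| ≤ 2^{3.5d+1} · L · I for every 1 ≤ v ≤ d. Suppose that |h_{l,x}(s − 1)| ≤ (2I)^l for every 0 ≤ l ≤ d−1. Then |Σ_{v=0}^{d} a_v I^{−v} (h_{v,x}(s) − h_{v,x}(s−1))| ≤ (d · 2^{4.5d+1} / n) · L. -/
/-!
`hfun n x v` is the falling-factorial analogue of `y ↦ (y / n - x) ^ v`, so its backward difference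
behaves like a derivative: `h_{v,x}(s) - h_{v,x}(s - 1) = (v / n) h_{v-1,x}(s - 1)`. Combined with
the hypotheses, the `v`-th summand is at most `2^{3.5d+1} L v 2^{v-1} / n`, and
`Σ_{v ≤ d} v 2^{v-1} ≤ d 2^d` gives the bound.
-/

theorem hfun_zero (n : ℕ) (x y : ℝ) : hfun n x 0 y = 1 := by
  simp [hfun]

theorem prod_range_succ_sub_prod_sub_one {R : Type*} [CommRing R] (y : R) (l : ℕ) :
    ∏ i ∈ Finset.range (l + 1), (y - i) - ∏ i ∈ Finset.range (l + 1), (y - 1 - i) =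
      (l + 1) * ∏ i ∈ Finset.range l, (y - 1 - i) := by
  induction l with
  | zero => simp
  | succ l ih =>
    rw [Finset.prod_range_succ (fun i : ℕ => y - i) (l + 1),
      Finset.prod_range_succ (fun i : ℕ => y - 1 - i) (l + 1),
      Finset.prod_range_succ (fun i : ℕ => y - 1 - i) l]
    rw [Finset.prod_range_succ (fun i : ℕ => y - 1 - i) l] at ih
    push_cast at ih ⊢
    linear_combination (y - l - 1) * ih

theorem prod_range_succ_div_sub_prod_sub_one_div {K : Type*} [Field K] (c y : K) (l : ℕ) :
    ∏ i ∈ Finset.range (l + 1), ((y - i) / c) - ∏ i ∈ Finset.range (l + 1), ((y - 1 - i) / c) =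
      (l + 1) / c * ∏ i ∈ Finset.range l, ((y - 1 - i) / c) := by
  simp only [Finset.prod_div_distrib, Finset.prod_const, Finset.card_range]
  rw [div_sub_div_same, prod_range_succ_sub_prod_sub_one]
  ring

theorem hfun_succ_sub_hfun_sub_one (n : ℕ) (x y : ℝ) (w : ℕ) :
    hfun n x (w + 1) y - hfun n x (w + 1) (y - 1) = (w + 1) / n * hfun n x w (y - 1) := by
  unfold hfun
  rw [← Finset.sum_sub_distrib, Finset.sum_range_succ', Finset.mul_sum]
  simp only [Finset.range_zero, Finset.prod_empty, sub_self, add_zero]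
  refine Finset.sum_congr rfl fun l _ => ?_
  have hchoose : ((w + 1).choose (l + 1) : ℝ) * (l + 1) = (w + 1) * w.choose l := by
    exact_mod_cast (Nat.add_one_mul_choose_eq w l).symm
  rw [Nat.add_sub_add_right]
  linear_combination ((w + 1).choose (l + 1) * (-x) ^ (w - l) : ℝ) *
      prod_range_succ_div_sub_prod_sub_one_div (n : ℝ) y l +
    ((-x) ^ (w - l) * (∏ i ∈ Finset.range l, ((y - 1 - i) / n)) / n) * hchoose

theorem sum_range_succ_mul_two_pow_le (d : ℕ) :
    ∑ w ∈ Finset.range d, ((w : ℝ) + 1) * 2 ^ w ≤ d * 2 ^ d := by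
  induction d with
  | zero => simp
  | succ d ih =>
    rw [Finset.sum_range_succ, pow_succ]
    push_cast
    nlinarith [pow_pos (two_pos : (0 : ℝ) < 2) d]

theorem abs_div_pow_mul_hfun_succ_sub_le (n : ℕ) (x y : ℝ) (w : ℕ) {a B I : ℝ} (hI : 0 < I)
    (ha : |a| ≤ B * I) (hh : |hfun n x w (y - 1)| ≤ (2 * I) ^ w) :
    |a / I ^ (w + 1) * (hfun n x (w + 1) y - hfun n x (w + 1) (y - 1))| ≤
      B / n * ((w + 1) * 2 ^ w) := by
  rw [hfun_succ_sub_hfun_sub_one, abs_mul, abs_mul, abs_div, abs_pow, abs_of_pos hI,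
    abs_of_nonneg (by positivity : (0 : ℝ) ≤ (w + 1) / n)]
  have hBI : 0 ≤ B * I := (abs_nonneg a).trans ha
  calc |a| / I ^ (w + 1) * ((w + 1) / n * |hfun n x w (y - 1)|)
      ≤ B * I / I ^ (w + 1) * ((w + 1) / n * (2 * I) ^ w) := by gcongr
    _ = B / n * ((w + 1) * 2 ^ w) := by
      field_simp
      ring

theorem two_rpow_mul_two_pow (d : ℕ) :
    (2 : ℝ) ^ ((7 * (d : ℝ) + 2) / 2) * 2 ^ d = 2 ^ ((9 * (d : ℝ) + 2) / 2) := by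
  rw [← Real.rpow_natCast, ← Real.rpow_add two_pos]
  ring_nf

theorem type1_difference_bound_general (n : ℕ) (d : ℕ)
    (L I : ℝ) (hL : 0 ≤ L) (hI : 0 < I) (x s : ℝ) (a : ℕ → ℝ)
    (ha : ∀ v, 1 ≤ v → v ≤ d → |a v| ≤ 2 ^ ((7 * (d : ℝ) + 2) / 2) * L * I)
    (hh : ∀ l, l ≤ d - 1 → |hfun n x l (s - 1)| ≤ (2 * I) ^ l) :
    |∑ v ∈ Finset.range (d + 1), a v / I ^ v * (hfun n x v s - hfun n x v (s - 1))|
      ≤ ((d : ℝ) * 2 ^ ((9 * (d : ℝ) + 2) / 2) / n) * L := by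
  set C : ℝ := 2 ^ ((7 * (d : ℝ) + 2) / 2)
  have hterm : ∀ w ∈ Finset.range d,
      |a (w + 1) / I ^ (w + 1) * (hfun n x (w + 1) s - hfun n x (w + 1) (s - 1))| ≤
        C * L / n * ((w + 1) * 2 ^ w) := fun w hw => by
    have hwd := Finset.mem_range.mp hw
    exact abs_div_pow_mul_hfun_succ_sub_le n x s w hI (ha _ w.succ_pos hwd) (hh w (by omega))
  rw [Finset.sum_range_succ', hfun_zero, hfun_zero, sub_self, mul_zero, add_zero]
  calc |∑ w ∈ Finset.range d,
        a (w + 1) / I ^ (w + 1) * (hfun n x (w + 1) s - hfun n x (w + 1) (s - 1))|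
      ≤ ∑ w ∈ Finset.range d, C * L / n * ((w + 1) * 2 ^ w) :=
        (Finset.abs_sum_le_sum_abs _ _).trans (Finset.sum_le_sum hterm)
    _ = C * L / n * ∑ w ∈ Finset.range d, ((w : ℝ) + 1) * 2 ^ w := (Finset.mul_sum ..).symm
    _ ≤ C * L / n * (d * 2 ^ d) := by
      gcongr
      exact sum_range_succ_mul_two_pow_le d
    _ = ((d : ℝ) * 2 ^ ((9 * (d : ℝ) + 2) / 2) / n) * L := by
      rw [← two_rpow_mul_two_pow]
      ring

/-- Type-1 difference bound: if `|a_v| ≤ 2^{3.5d+1} L I` for `1 ≤ v ≤ d` and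
`|h_{l,x}(s-1)| ≤ (2I)^l` for `0 ≤ l ≤ d-1`, then
`|Σ_{v=0}^{d} a_v I^{-v} (h_{v,x}(s) - h_{v,x}(s-1))| ≤ (d 2^{4.5d+1}/n) L`. -/
theorem type1_difference_bound (n : ℕ) (hn : 0 < n) (d : ℕ) (hd : 1 ≤ d)
    (L I : ℝ) (hL : 0 ≤ L) (hI : 0 < I) (x s : ℝ) (a : ℕ → ℝ)
    (ha : ∀ v, 1 ≤ v → v ≤ d → |a v| ≤ 2 ^ ((7 * (d : ℝ) + 2) / 2) * L * I)
    (hh : ∀ l, l ≤ d - 1 → |hfun n x l (s - 1)| ≤ (2 * I) ^ l) :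
    |∑ v ∈ Finset.range (d + 1), a v / I ^ v * (hfun n x v s - hfun n x v (s - 1))|
      ≤ ((d : ℝ) * 2 ^ ((9 * (d : ℝ) + 2) / 2) / n) * L :=
  type1_difference_bound_general n d L I hL hI x s a ha hh
end

section
/- Let k ≥ 2 be an integer and ε' ∈ (0, 1) a real number. Define the probability distributions p₁ := ((1−ε')/(3(k−1)), …, (1−ε')/(3(k−1)), (2+ε')/3) and p₂ := (1/(3(k−1)), …, 1/(3(k−1)), 2/3) on k symbols, where the first k−1 coordinates are equal. Then their Shannon entropies satisfy H(p₂) − H(p₁) ≥ (ε'/3) · log(2(k−1)/e). -/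
open scoped BigOperators

/-- The Shannon entropy `H(q) = Σ_i q_i log(1/q_i)` of a distribution `q` on `Fin k`
(note that in Mathlib `Real.log (1/0) = 0`, matching the convention `0 · log(1/0) = 0`). -/
noncomputable def shannonEntropy {k : ℕ} (q : Fin k → ℝ) : ℝ :=
  ∑ i, q i * Real.log (1 / q i)

/-!
Write `m = k - 1`. Spreading a mass `t` uniformly over `m` symbols contributes
`negMulLog t + t log m` to the entropy, so `H(p₂) - H(p₁)` is `(ε'/3) log m` plus the entropy
gap of the two-point distributions `(1/3, 2/3)` and `((1-ε')/3, (2+ε')/3)`. Bounding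
`negMulLog` by its tangent lines at `1` and at `2` shows that the latter gap is at least
`(ε'/3) log 2`, which is more than the `(ε'/3)(log 2 - 1)` needed.
-/

open Real

theorem shannonEntropy_eq_sum_negMulLog {k : ℕ} (q : Fin k → ℝ) :
    shannonEntropy q = ∑ i, negMulLog (q i) := by
  simp [shannonEntropy, negMulLog, log_inv]

theorem shannonEntropy_ite_lt_pred {k : ℕ} (hk : 0 < k) (a b : ℝ) :
    shannonEntropy (fun i : Fin k => if (i : ℕ) < k - 1 then a else b)
      = ((k : ℝ) - 1) * negMulLog a + negMulLog b := by
  obtain ⟨m, rfl⟩ : ∃ m, k = m + 1 := ⟨k - 1, by omega⟩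
  simp [shannonEntropy_eq_sum_negMulLog, Fin.sum_univ_castSucc]

theorem negMulLog_div (t c : ℝ) : negMulLog (t / c) = (negMulLog t + t * log c) / c := by
  rw [div_eq_mul_inv, negMulLog_mul, negMulLog_def]
  simp only [log_inv]
  ring

theorem negMulLog_le_tangent {a y : ℝ} (ha : 0 < a) (hy : 0 ≤ y) :
    negMulLog y ≤ -y * log a + (a - y) := by
  have hscaled : negMulLog (y / a) ≤ 1 - y / a := negMulLog_le_one_sub_self (by positivity)
  rw [negMulLog_div, div_le_iff₀ ha] at hscaled
  field_simp at hscaled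
  linarith

/-- For `k ≥ 2` and `ε' ∈ (0,1)`, with
`p₁ = ((1-ε')/(3(k-1)), …, (1-ε')/(3(k-1)), (2+ε')/3)` and
`p₂ = (1/(3(k-1)), …, 1/(3(k-1)), 2/3)`,
the entropy difference satisfies `H(p₂) - H(p₁) ≥ (ε'/3) log(2(k-1)/e)`. -/
theorem entropy_gap (k : ℕ) (hk : 2 ≤ k) (ε' : ℝ) (hε0 : 0 < ε') (hε1 : ε' < 1) :
    shannonEntropy (fun i : Fin k =>
        if (i : ℕ) < k - 1 then 1 / (3 * ((k : ℝ) - 1)) else 2 / 3)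
      - shannonEntropy (fun i : Fin k =>
        if (i : ℕ) < k - 1 then (1 - ε') / (3 * ((k : ℝ) - 1)) else (2 + ε') / 3)
      ≥ (ε' / 3) * Real.log (2 * ((k : ℝ) - 1) / Real.exp 1) := by
  have hm : (0 : ℝ) < (k : ℝ) - 1 := by
    have : (2 : ℝ) ≤ k := by exact_mod_cast hk
    linarith
  have hlog : log (2 * ((k : ℝ) - 1) / exp 1) = log 2 + log ((k : ℝ) - 1) - 1 := by
    rw [log_div (by positivity) (exp_ne_zero 1), log_mul two_ne_zero hm.ne', log_exp]
  have hsmall : negMulLog (1 - ε') ≤ ε' := by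
    simpa using negMulLog_le_one_sub_self (x := 1 - ε') (by linarith)
  have hlarge : negMulLog (2 + ε') ≤ -(2 + ε') * log 2 - ε' :=
    (negMulLog_le_tangent two_pos (by linarith)).trans_eq (by ring)
  rw [shannonEntropy_ite_lt_pred (by omega), shannonEntropy_ite_lt_pred (by omega),
    ← div_div, ← div_div, hlog]
  simp only [negMulLog_div, negMulLog_one]
  field_simp
  simp only [negMulLog] at hsmall hlarge ⊢
  linarith
end

section
/- Let k ≥ 2 be an integer, a ∈ (1/2, 1) and ε'' ∈ (0, 1) real numbers. Define the probability distributions p₃ := ((1−ε'')/(3(k−1)), …, (1−ε'')/(3(k−1)), (2+ε'')/3) and p₂ := (1/(3(k−1)), …, 1/(3(k−1)), 2/3) on k symbols, where the first k−1 coordinates are equal. Then the power sums of order a satisfy P_a(p₂) − P_a(p₃) ≥ (a·ε''/(2·3^a)) · ((k−1)^{1−a} − 2^a). -/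
open scoped BigOperators

/-- The power sum of order `a`: `P_a(q) = Σ_i (q_i)^a` (real power). -/
noncomputable def powerSum {k : ℕ} (a : ℝ) (q : Fin k → ℝ) : ℝ :=
  ∑ i, (q i) ^ a

/-- For `k ≥ 2`, `a ∈ (1/2, 1)`, and `ε'' ∈ (0,1)`, with
`p₃ = ((1-ε'')/(3(k-1)), …, (1-ε'')/(3(k-1)), (2+ε'')/3)` and
`p₂ = (1/(3(k-1)), …, 1/(3(k-1)), 2/3)`,
the power sums satisfy `P_a(p₂) - P_a(p₃) ≥ (a ε''/(2·3^a)) ((k-1)^{1-a} - 2^a)`. -/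
theorem power_sum_gap (k : ℕ) (hk : 2 ≤ k) (a : ℝ) (ha1 : 1 / 2 < a) (ha2 : a < 1)
    (ε'' : ℝ) (hε0 : 0 < ε'') (hε1 : ε'' < 1) :
    powerSum a (fun i : Fin k =>
        if (i : ℕ) < k - 1 then 1 / (3 * ((k : ℝ) - 1)) else 2 / 3)
      - powerSum a (fun i : Fin k =>
        if (i : ℕ) < k - 1 then (1 - ε'') / (3 * ((k : ℝ) - 1)) else (2 + ε'') / 3)
      ≥ (a * ε'' / (2 * (3 : ℝ) ^ a)) * (((k : ℝ) - 1) ^ (1 - a) - (2 : ℝ) ^ a) := by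
  obtain ⟨n, rfl⟩ : ∃ n, k = n + 2 := ⟨k - 2, by omega⟩
  have ha0 : 0 < a := lt_trans (by norm_num) ha1
  have hkcast : ((n + 2 : ℕ) : ℝ) - 1 = (n : ℝ) + 1 := by push_cast; ring
  set K : ℝ := (n : ℝ) + 1 with hKdef
  have hK : 0 < K := by positivity
  have hsum : ∀ c d : ℝ, powerSum a (fun i : Fin (n + 2) =>
      if (i : ℕ) < n + 2 - 1 then c else d) = ((n : ℝ) + 1) * c ^ a + d ^ a := by
    intro c d
    unfold powerSum
    rw [Fin.sum_univ_castSucc]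
    have h1 : ∀ i : Fin (n + 1), ((if ((i.castSucc : Fin (n+2)) : ℕ) < n + 2 - 1 then c else d) : ℝ) ^ a
        = c ^ a := by
      intro i
      rw [if_pos]
      simp only [Fin.coe_castSucc]; omega
    rw [Finset.sum_congr rfl (fun i _ => h1 i)]
    simp [nsmul_eq_mul]
  rw [hkcast, hsum, hsum]
  have h3a : (0:ℝ) < (3:ℝ) ^ a := by positivity
  have hKa : (0:ℝ) < K ^ a := by positivity
  have h2a : (0:ℝ) < (2:ℝ) ^ a := by positivity
  have hP : (0:ℝ) < K ^ (1 - a) := by positivity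
  have e1 : K * (1 / (3 * K)) ^ a = K ^ (1 - a) / 3 ^ a := by
    rw [Real.div_rpow zero_le_one (by positivity), Real.mul_rpow (by norm_num) hK.le,
      Real.one_rpow, Real.rpow_sub hK, Real.rpow_one]
    rw [mul_one_div, div_div, mul_comm (3^a:ℝ)]
  have e2 : ((2:ℝ) / 3) ^ a = 2 ^ a / 3 ^ a :=
    Real.div_rpow (by norm_num) (by norm_num) a
  have e3 : K * ((1 - ε'') / (3 * K)) ^ a = K ^ (1 - a) * (1 - ε'') ^ a / 3 ^ a := by
    rw [Real.div_rpow (by linarith) (by positivity), Real.mul_rpow (by norm_num) hK.le,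
      Real.rpow_sub hK, Real.rpow_one]
    rw [mul_div_assoc', mul_comm ((3:ℝ)^a), ← div_div, div_mul_eq_mul_div]
  have e4 : ((2 + ε'') / 3) ^ a = (2 + ε'') ^ a / 3 ^ a :=
    Real.div_rpow (by linarith) (by norm_num) a
  rw [e1, e2, e3, e4]
  have hQ : (1 - ε'') ^ a ≤ 1 - a * ε'' := by
    have := rpow_one_add_le_one_add_mul_self (s := -ε'') (by linarith) ha0.le ha2.le
    have h : (1 + -ε'') = 1 - ε'' := by ring
    rw [h] at this
    linarith
  have hR : (2 + ε'') ^ a ≤ 2 ^ a + a * ε'' * 2 ^ a / 2 := by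
    have h1 : (2 + ε'' : ℝ) = 2 * (1 + ε'' / 2) := by ring
    have h2 : ((1 : ℝ) + ε'' / 2) ^ a ≤ 1 + a * (ε'' / 2) :=
      rpow_one_add_le_one_add_mul_self (by linarith) ha0.le ha2.le
    calc (2 + ε'') ^ a = 2 ^ a * (1 + ε'' / 2) ^ a := by
          rw [h1, Real.mul_rpow (by norm_num) (by linarith)]
      _ ≤ 2 ^ a * (1 + a * (ε'' / 2)) := by
          exact mul_le_mul_of_nonneg_left h2 h2a.le
      _ = 2 ^ a + a * ε'' * 2 ^ a / 2 := by ring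
  set P := K ^ (1 - a)
  set S := (2:ℝ) ^ a
  set Q := (1 - ε'') ^ a
  set R := (2 + ε'') ^ a
  set T := (3:ℝ) ^ a
  have key : a * ε'' / 2 * (P - S) ≤ P + S - (P * Q + R) := by
    nlinarith [mul_le_mul_of_nonneg_left hQ hP.le, mul_pos (mul_pos ha0 hε0) hP]
  rw [ge_iff_le, ← sub_nonneg]
  have goal_eq : P / T + S / T - (P * Q / T + R / T)
      - a * ε'' / (2 * T) * (P - S) = (P + S - (P * Q + R) - a * ε'' / 2 * (P - S)) / T := by
    field_simp
  rw [goal_eq]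
  exact div_nonneg (by linarith) h3a.le
end
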